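/- arXiv:2601.15984 — 2 statements merged into one kernel-verified Lean document; each statement's English description precedes it below -/
import Mathlib

section
/- (Stability of lazy iterates on the ℓ2 ball) Let X = {x ∈ ℝ^d : ‖x‖ ≤ R} and consider two points y_t, y_{t+1} with ‖y_{t+1} − y_t‖ ≤ G/σ and min over the segment between them of the norm at least R + αGn/σ for some α ∈ [0,1], n ≥ 0. Then ‖Π(y_{t+1}) − Π(y_t)‖ ≤ RG/(Rσ + αGn). -/
open RealInnerProductSpace

lemma radial_lip {E : Type*} [NormedAddCommGroup E] [InnerProductSpace ℝ E]
    {r R : ℝ} (hr : 0 < r) (hR : 0 ≤ R) {x y : E} (hx : r ≤ ‖x‖) (hy : r ≤ ‖y‖) :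
    ‖(R / ‖x‖) • x - (R / ‖y‖) • y‖ ≤ R * ‖x - y‖ / r := by
  have hxpos : (0:ℝ) < ‖x‖ := lt_of_lt_of_le hr hx
  have hypos : (0:ℝ) < ‖y‖ := lt_of_lt_of_le hr hy
  set u : E := (1 / ‖x‖) • x - (1 / ‖y‖) • y with hu
  have hfac : (R / ‖x‖) • x - (R / ‖y‖) • y = R • u := by
    rw [hu, smul_sub, smul_smul, smul_smul]
    congr 2 <;> field_simp
  have hcs : (inner ℝ x y : ℝ) ≤ ‖x‖ * ‖y‖ := real_inner_le_norm x y
  have hab : (0:ℝ) < ‖x‖ * ‖y‖ := by positivity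
  have hkey : (r * ‖u‖)^2 ≤ ‖x - y‖^2 := by
    have hxy : ‖x - y‖^2 = ‖x‖^2 - 2 * (inner ℝ x y : ℝ) + ‖y‖^2 := by
      rw [@norm_sub_sq_real]
    have huu : ‖u‖^2 = 2 - 2 * (inner ℝ x y : ℝ) / (‖x‖ * ‖y‖) := by
      rw [hu, @norm_sub_sq_real]
      rw [norm_smul, norm_smul, real_inner_smul_left, real_inner_smul_right]
      rw [Real.norm_eq_abs, Real.norm_eq_abs, abs_of_pos (by positivity),
        abs_of_pos (by positivity)]
      field_simp
      ring
    have hrw : (2:ℝ) - 2 * (inner ℝ x y : ℝ) / (‖x‖ * ‖y‖)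
        = (2 * (‖x‖ * ‖y‖) - 2 * (inner ℝ x y : ℝ)) / (‖x‖ * ‖y‖) := by
      field_simp
    rw [hxy, mul_pow, huu, hrw, ← mul_div_assoc, div_le_iff₀ hab]
    have h1 : (0:ℝ) ≤ (‖x‖ * ‖y‖ - r^2) * (‖x‖ * ‖y‖ - (inner ℝ x y : ℝ)) := by
      apply mul_nonneg
      · nlinarith
      · linarith
    have h2 : (0:ℝ) ≤ ‖x‖ * ‖y‖ * (‖x‖ - ‖y‖)^2 := by positivity
    nlinarith
  have h1 : r * ‖u‖ ≤ ‖x - y‖ := by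
    have := Real.sqrt_le_sqrt hkey
    rwa [Real.sqrt_sq (by positivity), Real.sqrt_sq (norm_nonneg _)] at this
  rw [hfac, norm_smul, Real.norm_eq_abs, abs_of_nonneg hR, mul_div_assoc]
  exact mul_le_mul_of_nonneg_left ((le_div_iff₀ hr).mpr (by linarith)) hR

/-- Stability of lazy iterates on the ℓ₂ ball: if `‖y' − y‖ ≤ G/σ` and the whole
segment between `y` and `y'` has norm at least `R + αGn/σ`, then the projections
onto the radius-`R` ball (given by `R y/‖y‖` outside the ball) satisfy
`‖Π(y') − Π(y)‖ ≤ RG/(Rσ + αGn)`. -/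
theorem stmt_6 {d : ℕ} (R σ G α : ℝ) (n : ℕ)
    (hR : 0 < R) (hσ : 0 < σ) (hG : 0 < G) (hα0 : 0 ≤ α) (hα1 : α ≤ 1)
    (y y' : EuclideanSpace ℝ (Fin d))
    (hmove : ‖y' - y‖ ≤ G / σ)
    (hseg : ∀ s ∈ Set.Icc (0 : ℝ) 1, R + α * G * n / σ ≤ ‖y + s • (y' - y)‖) :
    ‖(R / ‖y'‖) • y' - (R / ‖y‖) • y‖ ≤ R * G / (R * σ + α * G * n) := by
  set r : ℝ := R + α * G * n / σ with hrdef
  have hr : 0 < r := by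
    rw [hrdef]
    positivity
  have hx : r ≤ ‖y'‖ := by
    have := hseg 1 ⟨zero_le_one, le_refl 1⟩
    simpa using this
  have hy : r ≤ ‖y‖ := by
    have := hseg 0 ⟨le_refl 0, zero_le_one⟩
    simpa using this
  have hlip := radial_lip hr hR.le hx hy
  have hstep : R * ‖y' - y‖ / r ≤ R * (G / σ) / r := by
    gcongr
  have heq : R * (G / σ) / r = R * G / (R * σ + α * G * n) := by
    rw [hrdef]
    field_simp
  calc ‖(R / ‖y'‖) • y' - (R / ‖y‖) • y‖ ≤ R * ‖y' - y‖ / r := hlip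
    _ ≤ R * (G / σ) / r := hstep
    _ = R * G / (R * σ + α * G * n) := heq
end

section
/- (One-dimensional lazy iterates are nonpositive under the square wave) Let g_t be the k-periodic square wave (+1 for the first half of each period, −1 for the second half), let σ > 0, and define x_t = max(−1, min(1, −(1/σ)∑_{s=1}^{t−1} g_s)). Then x_t ≤ 0 for all t, and consequently ∑_{t ∈ B} g_t x_t ≥ −k/2 for each period block B of length k. -/
/-- One-dimensional lazy iterates are nonpositive under the square wave: with
`x_t = max(−1, min(1, −(1/σ) ∑_{s<t} g_s))`, we have `x_t ≤ 0` for all `t`, and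
each period block of length `k` contributes learner loss at least `−k/2`. -/
theorem stmt_12 (k : ℕ) (hk : 0 < k) (hke : Even k) (σ : ℝ) (hσ : 0 < σ)
    (g : ℕ → ℝ)
    (hg : ∀ t, 1 ≤ t → g t = if (t - 1) % k < k / 2 then 1 else -1)
    (x : ℕ → ℝ)
    (hx : ∀ t, 1 ≤ t →
      x t = max (-1) (min 1 (-(1 / σ) * ∑ s ∈ Finset.Icc 1 (t - 1), g s))) :
    (∀ t, 1 ≤ t → x t ≤ 0) ∧
    (∀ i, 1 ≤ i →
      -(k : ℝ) / 2 ≤ ∑ t ∈ Finset.Icc ((i - 1) * k + 1) (i * k), g t * x t) := by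
  obtain ⟨m, hm⟩ := hke
  have hk2 : k ≥ 2 := by omega
  have hkm : k / 2 = m := by omega
  -- partial sums equal min (n % k) (k - n % k)
  have key : ∀ n : ℕ, ∑ s ∈ Finset.Icc 1 n, g s = ((min (n % k) (k - n % k) : ℕ) : ℝ) := by
    intro n
    induction n with
    | zero => simp [Nat.zero_mod]
    | succ n ih =>
      rw [Finset.sum_Icc_succ_top (by omega : 1 ≤ n + 1), ih, hg (n + 1) (by omega)]
      have hr : n % k < k := Nat.mod_lt _ hk
      have h1 : (n + 1) % k = (n % k + 1) % k := by
        conv_lhs => rw [Nat.add_mod]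
        rw [Nat.mod_eq_of_lt (show 1 < k by omega)]
      have hcase : (n + 1) % k = n % k + 1 ∨ (n % k + 1 = k ∧ (n + 1) % k = 0) := by
        by_cases h : n % k + 1 < k
        · left; rw [h1, Nat.mod_eq_of_lt h]
        · right
          have hek : n % k + 1 = k := by omega
          constructor
          · exact hek
          · rw [h1, hek, Nat.mod_self]
      simp only [Nat.add_sub_cancel]
      by_cases h : n % k < k / 2
      · rw [if_pos h]
        have he : min ((n + 1) % k) (k - (n + 1) % k) = min (n % k) (k - n % k) + 1 := by
          omega
        rw [he]; push_cast [Nat.cast_min]; ring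
      · rw [if_neg h]
        have he : min ((n + 1) % k) (k - (n + 1) % k) + 1 = min (n % k) (k - n % k) := by
          omega
        rw [← he]; push_cast [Nat.cast_min]; ring
  have hPnn : ∀ n : ℕ, (0 : ℝ) ≤ ∑ s ∈ Finset.Icc 1 n, g s := by
    intro n; rw [key n]; positivity
  have hx0 : ∀ t, 1 ≤ t → x t ≤ 0 := by
    intro t ht
    rw [hx t ht]
    apply max_le (by norm_num)
    refine le_trans (min_le_right _ _) ?_
    have := hPnn (t - 1)
    have h1σ : 0 < 1 / σ := by positivity
    nlinarith
  refine ⟨hx0, ?_⟩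
  intro i hi
  set a := (i - 1) * k with ha
  have hik : i * k = a + k := by
    rw [ha, ← Nat.succ_mul]
    congr 1
    omega
  have hterm : ∀ t ∈ Finset.Icc (a + 1) (a + k),
      (if (t - 1) % k < k / 2 then (-1 : ℝ) else 0) ≤ g t * x t := by
    intro t ht
    rw [Finset.mem_Icc] at ht
    have ht1 : 1 ≤ t := by omega
    have hxl : -1 ≤ x t := by rw [hx t ht1]; exact le_max_left _ _
    have hxu : x t ≤ 0 := hx0 t ht1
    rw [hg t ht1]
    by_cases h : (t - 1) % k < k / 2
    · simp only [if_pos h]; linarith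
    · simp only [if_neg h]; nlinarith
  have hsum : ∑ t ∈ Finset.Icc (a + 1) (a + k),
      (if (t - 1) % k < k / 2 then (-1 : ℝ) else 0) = -(m : ℝ) := by
    rw [show Finset.Icc (a + 1) (a + k) = Finset.Ico (a + 1) (a + k + 1) by
        rw [Finset.Ico_add_one_right_eq_Icc], Finset.sum_Ico_eq_sum_range]
    have hrange : a + k + 1 - (a + 1) = k := by omega
    rw [hrange]
    have hcongr : ∀ j ∈ Finset.range k,
        (if (a + 1 + j - 1) % k < k / 2 then (-1 : ℝ) else 0)
          = (if j < m then (-1 : ℝ) else 0) := by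
      intro j hj
      rw [Finset.mem_range] at hj
      have : (a + 1 + j - 1) % k = j := by
        have : a + 1 + j - 1 = j + (i - 1) * k := by omega
        rw [this, Nat.add_mul_mod_self_right, Nat.mod_eq_of_lt hj]
      rw [this, hkm]
    rw [Finset.sum_congr rfl hcongr, Finset.sum_ite, Finset.sum_const,
      Finset.sum_const_zero, add_zero]
    have hf : (Finset.range k).filter (fun j => j < m) = Finset.range m := by
      ext j; simp only [Finset.mem_filter, Finset.mem_range]; omega
    rw [hf, Finset.card_range]
    simp
  rw [hik]
  calc -(k : ℝ) / 2 = -(m : ℝ) := by rw [hm]; push_cast; ring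
    _ = ∑ t ∈ Finset.Icc (a + 1) (a + k),
        (if (t - 1) % k < k / 2 then (-1 : ℝ) else 0) := hsum.symm
    _ ≤ _ := Finset.sum_le_sum hterm
end
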